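/- arXiv:2205.05004 — 4 statements merged into one kernel-verified Lean document; each statement's English description precedes it below -/
import Mathlib

section
/- Let G^SK = (V, w) be the SK graph of an Ising Hamiltonian on n spins, with total weight W = Σ_{1≤i<j≤n+1} w(i,j). For every subset S ⊆ V, 2·c(S) = H^SK(y^(S)) + W, where y^(S) ∈ {−1,+1}^{n+1} is defined by y^(S)_v = +1 if v ∈ S and y^(S)_v = −1 otherwise. -/
/-! With `y = y^(S)`, the edge `(u, v)` leaves `S` exactly when `(1 + y u) (1 - y v) = 4`, and
otherwise this product is `0`. Summing `w u v (1 + y u) (1 - y v)` over all ordered pairs, the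
linear part `y u - y v` cancels by symmetry of `w`, so `4 c(S) = Σ_{u,v} w u v (1 - y u y v)`.
The summand is symmetric and vanishes on the diagonal since `y u ^ 2 = 1`, so the right side is
twice the sum over `u < v`, which is `H^SK(y) + W`. -/

open Finset

/-- The Ising Hamiltonian on `n` spins (0-indexed: spins `0,…,n-1`):
`H(x) = −Σ_i h_i x_i − Σ_{i<j} J_{ij} x_i x_j`. -/
noncomputable def isingH (n : ℕ) (h : ℕ → ℝ) (J : ℕ → ℕ → ℝ) (x : ℕ → ℝ) : ℝ :=
  -(∑ i ∈ range n, h i * x i) -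
    ∑ i ∈ range n, ∑ j ∈ range n, if i < j then J i j * x i * x j else 0

/-- Weights of the SK graph on nodes `0,…,n` (node `n` is the extra node capturing the
external fields): `w(i,j) = J_{ij}` for `i < j < n`, `w(i,n) = h_i` for `i < n`,
extended symmetrically, with zero diagonal. -/
noncomputable def skWeight (n : ℕ) (h : ℕ → ℝ) (J : ℕ → ℕ → ℝ) (i j : ℕ) : ℝ :=
  if i < j then (if j = n then h i else J i j)
  else if j < i then (if i = n then h j else J j i)
  else 0

/-- The SK Hamiltonian `H^SK(y) = −Σ_{i<j} w(i,j) y_i y_j` on the `n+1` nodes. -/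
noncomputable def skH (n : ℕ) (h : ℕ → ℝ) (J : ℕ → ℕ → ℝ) (y : ℕ → ℝ) : ℝ :=
  -∑ i ∈ range (n + 1), ∑ j ∈ range (n + 1),
      if i < j then skWeight n h J i j * y i * y j else 0

/-- Total weight `W = Σ_{i<j} w(i,j)` of the SK graph. -/
noncomputable def skTotalWeight (n : ℕ) (h : ℕ → ℝ) (J : ℕ → ℕ → ℝ) : ℝ :=
  ∑ i ∈ range (n + 1), ∑ j ∈ range (n + 1), if i < j then skWeight n h J i j else 0

/-- Cut capacity `c(S) = Σ_{u ∈ S, v ∈ V \ S} w(u,v)` on the SK graph, for `S ⊆ {0,…,n}`. -/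
noncomputable def skCut (n : ℕ) (h : ℕ → ℝ) (J : ℕ → ℕ → ℝ) (S : Finset ℕ) : ℝ :=
  ∑ u ∈ S, ∑ v ∈ range (n + 1) \ S, skWeight n h J u v

/-- Minimum cut value of the SK graph (cuts range over all subsets, including `∅`). -/
noncomputable def skMC (n : ℕ) (h : ℕ → ℝ) (J : ℕ → ℕ → ℝ) : ℝ :=
  sInf (skCut n h J '' {S : Finset ℕ | S ⊆ range (n + 1)})

section CutAsSpinSum

variable {α R : Type*}

theorem sum_sum_eq_two_mul_sum_sum_ite_lt [LinearOrder α] [NonAssocSemiring R]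
    (s : Finset α) (f : α → α → R) (hsymm : ∀ i j, f i j = f j i) (hdiag : ∀ i, f i i = 0) :
    ∑ i ∈ s, ∑ j ∈ s, f i j = 2 * ∑ i ∈ s, ∑ j ∈ s, if i < j then f i j else 0 := by
  have hsplit : ∀ i j, f i j = (if i < j then f i j else 0) + (if j < i then f j i else 0) := by
    intro i j
    rcases lt_trichotomy i j with hij | rfl | hij
    · simp [hij, hij.not_gt]
    · simp [hdiag]
    · simp [hij, hij.not_gt, hsymm i j]
  simp_rw [two_mul, ← sum_add_distrib]
  conv_lhs => rw [sum_congr rfl fun i _ => sum_congr rfl fun j _ => hsplit i j]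
  simp only [sum_add_distrib]
  rw [sum_comm (f := fun i j => if j < i then f j i else 0)]

theorem sum_sum_mul_sub_eq_zero_of_symm [CommRing R] (s : Finset α) (w : α → α → R)
    (hsymm : ∀ i j, w i j = w j i) (g : α → R) :
    ∑ i ∈ s, ∑ j ∈ s, w i j * (g i - g j) = 0 := by
  have hswap : ∑ i ∈ s, ∑ j ∈ s, w i j * g j = ∑ i ∈ s, ∑ j ∈ s, w i j * g i := by
    rw [sum_comm]
    simp_rw [hsymm]
  simp_rw [mul_sub, sum_sub_distrib, hswap, sub_self]

theorem four_mul_cut_eq_sum_sum_mul_one_sub [DecidableEq α] [CommRing R] {V S : Finset α}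
    (hS : S ⊆ V) (w : α → α → R) (hsymm : ∀ i j, w i j = w j i) :
    4 * ∑ u ∈ S, ∑ v ∈ V \ S, w u v
      = ∑ u ∈ V, ∑ v ∈ V, w u v *
          (1 - (if u ∈ S then 1 else -1) * (if v ∈ S then 1 else -1)) := by
  set y : α → R := fun v => if v ∈ S then 1 else -1
  have hcut : 4 * ∑ u ∈ S, ∑ v ∈ V \ S, w u v
      = ∑ u ∈ V, ∑ v ∈ V, w u v * ((1 + y u) * (1 - y v)) := by
    have hfactor : ∀ u v, (1 + y u) * (1 - y v) = if u ∈ S ∧ v ∉ S then 4 else 0 := by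
      intro u v
      by_cases hu : u ∈ S <;> by_cases hv : v ∈ S <;> norm_num [y, hu, hv]
    nth_rw 1 [← inter_eq_right.2 hS]
    rw [← sum_ite_mem, sdiff_eq_filter, mul_sum]
    simp_rw [hfactor, mul_ite, mul_zero, ite_and, sum_filter]
    refine sum_congr rfl fun u _ => ?_
    split_ifs <;> simp [mul_sum, mul_comm]
  have hexpand : ∀ u v, w u v * ((1 + y u) * (1 - y v))
      = w u v * (1 - y u * y v) + w u v * (y u - y v) := fun u v => by ring
  simp_rw [hcut, hexpand, sum_add_distrib, sum_sum_mul_sub_eq_zero_of_symm V w hsymm y, add_zero]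
  rfl

end CutAsSpinSum

theorem skWeight_symm (n : ℕ) (h : ℕ → ℝ) (J : ℕ → ℕ → ℝ) (i j : ℕ) :
    skWeight n h J i j = skWeight n h J j i := by
  rcases lt_trichotomy i j with hij | rfl | hij
  · simp [skWeight, hij, hij.not_gt]
  · rfl
  · simp [skWeight, hij, hij.not_gt]

theorem skH_add_skTotalWeight (n : ℕ) (h : ℕ → ℝ) (J : ℕ → ℕ → ℝ) (y : ℕ → ℝ) :
    skH n h J y + skTotalWeight n h J
      = ∑ i ∈ range (n + 1), ∑ j ∈ range (n + 1),
          if i < j then skWeight n h J i j * (1 - y i * y j) else 0 := by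
  rw [skH, skTotalWeight, neg_add_eq_sub, ← sum_sub_distrib]
  refine sum_congr rfl fun i _ => ?_
  rw [← sum_sub_distrib]
  refine sum_congr rfl fun j _ => ?_
  split_ifs <;> ring

theorem statement_1_general (n : ℕ) (h : ℕ → ℝ) (J : ℕ → ℕ → ℝ)
    (S : Finset ℕ) (hS : S ⊆ range (n + 1)) :
    2 * skCut n h J S
      = skH n h J (fun v => if v ∈ S then 1 else -1) + skTotalWeight n h J := by
  have hfour := four_mul_cut_eq_sum_sum_mul_one_sub hS (skWeight n h J) (skWeight_symm n h J)
  set y : ℕ → ℝ := fun v => if v ∈ S then 1 else -1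
  have hspin : ∀ v, y v * y v = 1 := fun v => by by_cases hv : v ∈ S <;> simp [y, hv]
  rw [sum_sum_eq_two_mul_sum_sum_ite_lt _ _ (fun i j => by rw [skWeight_symm, mul_comm (y i)])
    (fun i => by rw [hspin, sub_self, mul_zero])] at hfour
  rw [skH_add_skTotalWeight, skCut]
  linarith

/-- for every `S ⊆ V`, `2·c(S) = H^SK(y^(S)) + W`, where `y^(S)_v = +1` if
`v ∈ S` and `−1` otherwise. -/
theorem statement_1 (n : ℕ) (hn : 1 ≤ n) (h : ℕ → ℝ) (J : ℕ → ℕ → ℝ)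
    (S : Finset ℕ) (hS : S ⊆ range (n + 1)) :
    2 * skCut n h J S
      = skH n h J (fun v => if v ∈ S then 1 else -1) + skTotalWeight n h J :=
  statement_1_general n h J S hS
end

section
/- Let G^SK = (V, w) be the SK graph of an Ising Hamiltonian H on n spins, and let S* ⊆ V be a min-cut of G^SK (a subset attaining the minimum cut value MC(G^SK)). Define x* ∈ {−1,+1}^n by x*_i = y^(S*)_i · y^(S*)_{n+1} for i = 1,…,n, where y^(S*)_v = +1 if v ∈ S* and −1 otherwise. Then H(x*) = min_{x ∈ {−1,+1}^n} H(x), i.e., x* is a ground state of H. -/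
open Finset

/-!
At the spin vector `y` of a cut `S` (`y_v = 1` on `S`, `-1` off it) every edge contributes
`-w` to `H^SK` unless it is cut, when it contributes `+w`; hence `H^SK(y) = 2 c(S) - W`.
Since `y_n² = 1`, the gauge `x_i = y_i y_n` identifies `H^SK(y)` with `H(x)`, and every spin
configuration `x` arises this way from the cut `{n} ∪ {i | x_i = 1}`. So minimising the cut
capacity minimises `H`.
-/

lemma sum_sum_eq_two_nsmul_sum_sum_ite_lt {α M : Type*} [LinearOrder α] [AddCommMonoid M]
    (s : Finset α) (F : α → α → M) (hsymm : ∀ i j, F i j = F j i) (hdiag : ∀ i, F i i = 0) :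
    ∑ i ∈ s, ∑ j ∈ s, F i j = 2 • ∑ i ∈ s, ∑ j ∈ s, if i < j then F i j else 0 := by
  have hsplit : ∀ i j, F i j = (if i < j then F i j else 0) + if j < i then F j i else 0 := by
    intro i j
    rcases lt_trichotomy i j with hij | rfl | hij
    · simp [hij, hij.not_gt]
    · simp [hdiag]
    · simp [hij, hij.not_gt, hsymm i j]
  have hswap : ∑ i ∈ s, ∑ j ∈ s, (if j < i then F j i else 0)
      = ∑ i ∈ s, ∑ j ∈ s, if i < j then F i j else 0 := sum_comm
  simp only [sum_congr rfl fun i _ => sum_congr rfl fun j _ => hsplit i j, sum_add_distrib,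
    hswap, two_nsmul]

section SKGraph

variable (n : ℕ) (h : ℕ → ℝ) (J : ℕ → ℕ → ℝ)

def cutSpin (S : Finset ℕ) (v : ℕ) : ℝ := if v ∈ S then 1 else -1

lemma skWeight_comm (i j : ℕ) : skWeight n h J i j = skWeight n h J j i := by
  unfold skWeight
  rcases lt_trichotomy i j with hij | rfl | hij
  · simp [hij, hij.not_gt]
  · simp
  · simp [hij, hij.not_gt]

lemma skWeight_self (i : ℕ) : skWeight n h J i i = 0 := by simp [skWeight]

lemma skCut_eq_sum_sum {S : Finset ℕ} (hS : S ⊆ range (n + 1)) :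
    skCut n h J S = ∑ u ∈ range (n + 1), ∑ v ∈ range (n + 1),
      skWeight n h J u v * (if u ∈ S then 1 else 0) * (1 - if v ∈ S then 1 else 0) := by
  calc skCut n h J S
      = ∑ u ∈ (range (n + 1)).filter (· ∈ S), ∑ v ∈ (range (n + 1)).filter (· ∉ S),
          skWeight n h J u v := by
        rw [filter_mem_eq_inter, inter_eq_right.2 hS, ← sdiff_eq_filter, skCut]
    _ = _ := by
        simp only [sum_filter]
        refine sum_congr rfl fun u _ => ?_
        by_cases hu : u ∈ S
        · simp only [hu, if_true, mul_one]
          exact sum_congr rfl fun v _ => by split_ifs <;> simp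
        · simp [hu]

lemma skH_cutSpin {S : Finset ℕ} (hS : S ⊆ range (n + 1)) :
    skH n h J (cutSpin S) = 2 * skCut n h J S - skTotalWeight n h J := by
  set w := skWeight n h J
  set χ : ℕ → ℝ := fun v => if v ∈ S then 1 else 0
  have hH := sum_sum_eq_two_nsmul_sum_sum_ite_lt (range (n + 1))
    (fun i j => w i j * cutSpin S i * cutSpin S j)
    (fun i j => by simp only [w, skWeight_comm n h J i j]; ring)
    (fun i => by simp [w, skWeight_self])
  have hW := sum_sum_eq_two_nsmul_sum_sum_ite_lt (range (n + 1)) w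
    (skWeight_comm n h J) (skWeight_self n h J)
  -- `y = 2χ - 1` turns `1 - y_i y_j` into twice the indicator that the edge `ij` is cut
  have hsplit : ∀ i j, w i j * cutSpin S i * cutSpin S j
      = w i j - 2 * (w i j * χ i * (1 - χ j)) - 2 * (w j i * χ j * (1 - χ i)) := by
    intro i j
    simp only [w, χ, cutSpin, skWeight_comm n h J j i]
    split_ifs <;> ring
  have hcut : skCut n h J S
      = ∑ i ∈ range (n + 1), ∑ j ∈ range (n + 1), w i j * χ i * (1 - χ j) :=
    skCut_eq_sum_sum n h J hS
  have hcut' : skCut n h J S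
      = ∑ i ∈ range (n + 1), ∑ j ∈ range (n + 1), w j i * χ j * (1 - χ i) := by
    rw [hcut, sum_comm]
  have hspins : ∑ i ∈ range (n + 1), ∑ j ∈ range (n + 1), w i j * cutSpin S i * cutSpin S j
      = ∑ i ∈ range (n + 1), ∑ j ∈ range (n + 1), w i j
        - 2 * skCut n h J S - 2 * skCut n h J S := by
    simp only [hsplit, sum_sub_distrib, ← mul_sum, ← hcut, ← hcut']
  rw [two_nsmul] at hH hW
  unfold skH skTotalWeight
  linarith

lemma skH_eq_isingH (y : ℕ → ℝ) (hy : y n * y n = 1) :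
    skH n h J y = isingH n h J (fun i => y i * y n) := by
  have hlast : ∑ j ∈ range (n + 1), (if n < j then skWeight n h J n j * y n * y j else 0) = 0 :=
    sum_eq_zero fun j hj => if_neg (by simp only [mem_range] at hj; omega)
  have hrow : ∀ i ∈ range n,
      ∑ j ∈ range (n + 1), (if i < j then skWeight n h J i j * y i * y j else 0)
        = h i * (y i * y n)
          + ∑ j ∈ range n, if i < j then J i j * (y i * y n) * (y j * y n) else 0 := by
    intro i hi
    rw [mem_range] at hi
    rw [sum_range_succ, add_comm]
    congr 1
    · simp only [hi, ↓reduceIte, skWeight]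
      ring
    · refine sum_congr rfl fun j hj => ?_
      split_ifs with hij
      · simp only [skWeight, hij, ↓reduceIte, (mem_range.1 hj).ne]
        linear_combination (-(J i j * y i * y j)) * hy
      · rfl
  unfold skH isingH
  rw [sum_range_succ, hlast, add_zero, sum_congr rfl hrow, sum_add_distrib]
  ring

lemma isingH_congr {x x' : ℕ → ℝ} (hx : ∀ i < n, x i = x' i) :
    isingH n h J x = isingH n h J x' := by
  unfold isingH
  congr 1
  · exact congrArg _ (sum_congr rfl fun i hi => by rw [hx i (mem_range.1 hi)])
  · exact sum_congr rfl fun i hi => sum_congr rfl fun j hj => by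
      rw [hx i (mem_range.1 hi), hx j (mem_range.1 hj)]

lemma isingH_cutSpin {S : Finset ℕ} (hS : S ⊆ range (n + 1)) :
    isingH n h J (fun i => cutSpin S i * cutSpin S n)
      = 2 * skCut n h J S - skTotalWeight n h J := by
  rw [← skH_eq_isingH n h J _ (by unfold cutSpin; split_ifs <;> norm_num), skH_cutSpin n h J hS]

lemma exists_cut_isingH_eq {x : ℕ → ℝ} (hx : ∀ i < n, x i = 1 ∨ x i = -1) :
    ∃ T ⊆ range (n + 1), isingH n h J x = 2 * skCut n h J T - skTotalWeight n h J := by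
  set T := insert n ((range n).filter (x · = 1))
  have hT : T ⊆ range (n + 1) := by
    intro v hv
    simp only [T, mem_insert, mem_filter, mem_range] at hv ⊢
    omega
  refine ⟨T, hT, ?_⟩
  rw [← isingH_cutSpin n h J hT]
  refine isingH_congr n h J fun i hi => ?_
  rcases hx i hi with hxi | hxi <;> simp [cutSpin, T, hi, hi.ne, hxi]

lemma skMC_le_skCut {T : Finset ℕ} (hT : T ⊆ range (n + 1)) : skMC n h J ≤ skCut n h J T := by
  have hfin : {S : Finset ℕ | S ⊆ range (n + 1)}.Finite :=
    (range (n + 1)).powerset.finite_toSet.subset fun S hS => mem_powerset.2 hS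
  exact csInf_le (hfin.image _).bddBelow ⟨T, hT, rfl⟩

end SKGraph

theorem statement_2_general (n : ℕ) (h : ℕ → ℝ) (J : ℕ → ℕ → ℝ)
    (S : Finset ℕ) (hS : S ⊆ range (n + 1))
    (hmin : skCut n h J S = skMC n h J) :
    isingH n h J
        (fun i => (if i ∈ S then (1 : ℝ) else -1) * (if n ∈ S then (1 : ℝ) else -1))
      = sInf (isingH n h J '' {x : ℕ → ℝ | ∀ i < n, x i = 1 ∨ x i = -1}) := by
  refine (IsLeast.csInf_eq ⟨Set.mem_image_of_mem _ fun i _ => ?_, ?_⟩).symm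
  · beta_reduce
    split_ifs <;> norm_num
  · rintro _ ⟨x, hx, rfl⟩
    obtain ⟨T, hT, hxT⟩ := exists_cut_isingH_eq n h J hx
    change isingH n h J (fun i => cutSpin S i * cutSpin S n) ≤ _
    rw [hxT, isingH_cutSpin n h J hS]
    linarith [hmin ▸ skMC_le_skCut n h J hT]

/-- if `S*` is a min-cut of the SK graph and
`x*_i = y^(S*)_i · y^(S*)_{n+1}` (0-indexed: the extra node is node `n`), then `x*` is a
ground state of `H`. -/
theorem statement_2 (n : ℕ) (hn : 1 ≤ n) (h : ℕ → ℝ) (J : ℕ → ℕ → ℝ)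
    (S : Finset ℕ) (hS : S ⊆ range (n + 1))
    (hmin : skCut n h J S = skMC n h J) :
    isingH n h J
        (fun i => (if i ∈ S then (1 : ℝ) else -1) * (if n ∈ S then (1 : ℝ) else -1))
      = sInf (isingH n h J '' {x : ℕ → ℝ | ∀ i < n, x i = 1 ∨ x i = -1}) :=
  statement_2_general n h J S hS hmin
end

section
/- Let G = (V, w) be a weighted graph, x, y distinct nodes forming an antipolar pair (ν_G({x,y}) < 0), and Y ⊆ V a non-separable set with y ∈ Y and x ∉ Y. Then for every z ∈ Y, the pair (x, z) is antipolar, i.e., ν_G({x,z}) < 0. -/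
open Finset

variable {V : Type*}

/-- Cut capacity of a cut `S` in the weighted graph `(V, w)`:
`c(S) = Σ_{u ∈ S, v ∈ V \ S} w(u,v)`. -/
noncomputable def cutVal [Fintype V] [DecidableEq V] (w : V → V → ℝ) (S : Finset V) : ℝ :=
  ∑ u ∈ S, ∑ v ∈ Sᶜ, w u v

/-- Minimum cut value `MC(G) = min_{S ⊆ V} c(S)` (cuts range over all subsets). -/
noncomputable def minCutVal [Fintype V] [DecidableEq V] (w : V → V → ℝ) : ℝ :=
  sInf (Set.range (cutVal w))

/-- `S` separates `X` iff `X ∩ S ∉ {∅, X}`. -/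
def Separates [DecidableEq V] (S X : Finset V) : Prop :=
  X ∩ S ≠ ∅ ∧ X ∩ S ≠ X

/-- `X` is non-separable: no min-cut separates `X`. -/
def NonSepSet [Fintype V] [DecidableEq V] (w : V → V → ℝ) (X : Finset V) : Prop :=
  ∀ S : Finset V, cutVal w S = minCutVal w → ¬ Separates S X

/-- `X` is weakly non-separable: some min-cut separates `X` and some min-cut does not. -/
def WeakNonSepSet [Fintype V] [DecidableEq V] (w : V → V → ℝ) (X : Finset V) : Prop :=
  (∃ S : Finset V, cutVal w S = minCutVal w ∧ Separates S X) ∧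
  (∃ S : Finset V, cutVal w S = minCutVal w ∧ ¬ Separates S X)

/-- Non-separability index
`ν_G(X) = min_{S ⊆ V, S ⊖ X} c(S) − min_{S ⊆ V, ¬(S ⊖ X)} c(S)`. -/
noncomputable def nuIdx [Fintype V] [DecidableEq V] (w : V → V → ℝ) (X : Finset V) : ℝ :=
  sInf (cutVal w '' {S : Finset V | Separates S X}) -
  sInf (cutVal w '' {S : Finset V | ¬ Separates S X})

/-! `ν_G(X) < 0` exactly when every min-cut separates `X`. A min-cut then puts exactly one of
`x, y` inside; not separating `Y`, it puts `z` on the side of `y`, so it separates `{x, z}`. -/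

section MinCut

variable [Fintype V] [DecidableEq V] (w : V → V → ℝ)

lemma cutVal_empty : cutVal w ∅ = 0 := by
  simp [cutVal]

lemma minCutVal_le_cutVal (S : Finset V) : minCutVal w ≤ cutVal w S :=
  csInf_le (Set.finite_range _).bddBelow (Set.mem_range_self S)

lemma exists_cutVal_eq_minCutVal : ∃ S : Finset V, cutVal w S = minCutVal w :=
  (Set.range_nonempty (cutVal w)).csInf_mem (Set.finite_range _)

-- Also for `s = ∅`, where `sInf ∅ = 0` in `ℝ`: this uses `c(∅) = 0`.
lemma minCutVal_le_sInf_image (s : Set (Finset V)) : minCutVal w ≤ sInf (cutVal w '' s) := by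
  rcases s.eq_empty_or_nonempty with rfl | hs
  · simpa [Real.sInf_empty, cutVal_empty] using minCutVal_le_cutVal w ∅
  · exact le_csInf (hs.image _) (by rintro _ ⟨S, -, rfl⟩; exact minCutVal_le_cutVal w S)

lemma nuIdx_neg_iff (X : Finset V) :
    nuIdx w X < 0 ↔ ∀ S, cutVal w S = minCutVal w → Separates S X := by
  have hsep := minCutVal_le_sInf_image w {S | Separates S X}
  have hbdd : BddBelow (cutVal w '' {S | ¬ Separates S X}) := (Set.toFinite _).bddBelow
  unfold nuIdx
  constructor
  · intro hneg S hS
    by_contra hS_sep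
    have : sInf (cutVal w '' {S | ¬ Separates S X}) ≤ minCutVal w :=
      hS ▸ csInf_le hbdd ⟨S, hS_sep, rfl⟩
    linarith
  · intro hall
    obtain ⟨S, hS⟩ := exists_cutVal_eq_minCutVal w
    have hsep_le : sInf (cutVal w '' {S | Separates S X}) ≤ minCutVal w :=
      hS ▸ csInf_le (Set.toFinite _).bddBelow ⟨S, hall S hS, rfl⟩
    have hne : (cutVal w '' {S | ¬ Separates S X}).Nonempty :=
      ⟨_, ∅, by simp [Separates], rfl⟩
    obtain ⟨T, hT, hT_inf⟩ := hne.csInf_mem (Set.toFinite _)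
    have hT_gt : minCutVal w < cutVal w T :=
      (minCutVal_le_cutVal w T).lt_of_ne fun h => hT (hall T h.symm)
    linarith

end MinCut

lemma not_separates_iff [DecidableEq V] {S X : Finset V} :
    ¬ Separates S X ↔ ∀ a ∈ X, ∀ b ∈ X, (a ∈ S ↔ b ∈ S) := by
  rw [Separates, not_and_or, not_not, not_not, Finset.eq_empty_iff_forall_notMem,
    Finset.inter_eq_left]
  constructor
  · rintro (h | h) a ha b hb
    · exact iff_of_false (h a <| Finset.mem_inter.mpr ⟨ha, ·⟩) (h b <| Finset.mem_inter.mpr ⟨hb, ·⟩)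
    · exact iff_of_true (h ha) (h hb)
  · intro h
    by_cases hS : ∃ a ∈ X, a ∈ S
    · obtain ⟨a, ha, haS⟩ := hS
      exact Or.inr fun b hb => (h a ha b hb).1 haS
    · exact Or.inl fun a haS => hS ⟨a, Finset.mem_inter.mp haS⟩

lemma separates_pair_iff [DecidableEq V] {S : Finset V} {a b : V} :
    Separates S {a, b} ↔ (a ∈ S ↔ b ∉ S) := by
  rw [← not_not (a := Separates S _), not_separates_iff]
  simp only [Finset.mem_insert, Finset.mem_singleton, forall_eq_or_imp, forall_eq]
  tauto

theorem statement_13_general [Fintype V] [DecidableEq V]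
    (w : V → V → ℝ)
    (x y : V) (hanti : nuIdx w {x, y} < 0)
    (Y : Finset V) (hY : NonSepSet w Y) (hyY : y ∈ Y) :
    ∀ z ∈ Y, nuIdx w {x, z} < 0 := by
  intro z hzY
  rw [nuIdx_neg_iff] at hanti ⊢
  intro S hS
  have hxy := separates_pair_iff.mp (hanti S hS)
  have hyz := not_separates_iff.mp (hY S hS) y hyY z hzY
  rw [separates_pair_iff]
  tauto

/-- if `(x, y)` is an antipolar pair and `y ∈ Y` for a non-separable set `Y`
(with `x ∉ Y`), then `(x, z)` is an antipolar pair for every `z ∈ Y`. -/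
theorem statement_13 [Fintype V] [DecidableEq V] [Nonempty V]
    (w : V → V → ℝ) (hsymm : ∀ a b, w a b = w b a) (hdiag : ∀ a, w a a = 0)
    (x y : V) (hxy : x ≠ y) (hanti : nuIdx w {x, y} < 0)
    (Y : Finset V) (hY : NonSepSet w Y) (hyY : y ∈ Y) (hxY : x ∉ Y) :
    ∀ z ∈ Y, nuIdx w {x, z} < 0 :=
  statement_13_general w x y hanti Y hY hyY
end

section
/- Let G = (V, w) be a weighted graph and X ⊆ V a set with at least two elements, and set Y = V \ X. Then ν_G(X) ≥ min over nonempty proper subsets Z ⊊ X of ( c(Z, X\Z) − P_X(Z) ), where c(A,B) = Σ_{a∈A, b∈B} w(a,b), c_abs(A,B) = Σ_{a∈A, b∈B} |w(a,b)|, and P_X(Z) = min( (1/2)·Σ_{u∈Y} |Σ_{v∈Z} w(u,v) − Σ_{v∈X\Z} w(u,v)| , c_abs(Z, Y) , c_abs(X\Z, Y) ). -/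
open Finset

variable {V : Type*}

/-!
Let `S` be a separating cut of minimum capacity, `Z = X ∩ S`, `A = S \ X` and `Y = V \ X`;
the cuts `A` and `X ∪ A` do not separate `X`, and moving `Z` across gives
`c(S) - c(A) = c(Z, X \ Z) + c(Z, Y \ A) - c(Z, A)` and
`c(S) - c(X ∪ A) = c(Z, X \ Z) + c(X \ Z, A) - c(X \ Z, Y \ A)`.
Bounding the last two terms of either identity by absolute values, or of their average,
yields the three terms of `P_X(Z)`.
-/

noncomputable def crossWeight (w : V → V → ℝ) (A B : Finset V) : ℝ :=
  ∑ a ∈ A, ∑ b ∈ B, w a b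

noncomputable def splitPenalty [Fintype V] [DecidableEq V] (w : V → V → ℝ) (X Z : Finset V) :
    ℝ :=
  min (min ((1 / 2) * ∑ u ∈ Xᶜ, |(∑ v ∈ Z, w u v) - ∑ v ∈ X \ Z, w u v|)
      (∑ a ∈ Z, ∑ b ∈ Xᶜ, |w a b|))
    (∑ a ∈ X \ Z, ∑ b ∈ Xᶜ, |w a b|)

theorem Finset.abs_sum_sub_sum_sdiff_le_sum_abs {ι α : Type*} [DecidableEq ι] [AddCommGroup α]
    [LinearOrder α] [IsOrderedAddMonoid α] {A Y : Finset ι} (hA : A ⊆ Y) (f : ι → α) :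
    |∑ u ∈ A, f u - ∑ u ∈ Y \ A, f u| ≤ ∑ u ∈ Y, |f u| := by
  rw [← sum_sdiff hA (f := fun u => |f u|), add_comm]
  exact (abs_sub _ _).trans (add_le_add (abs_sum_le_sum_abs _ _) (abs_sum_le_sum_abs _ _))

section Symmetric

variable {w : V → V → ℝ} (hsymm : ∀ a b, w a b = w b a)
include hsymm

theorem crossWeight_comm (A B : Finset V) : crossWeight w A B = crossWeight w B A := by
  rw [crossWeight, sum_comm]
  exact sum_congr rfl fun b _ => sum_congr rfl fun a _ => hsymm a b

theorem sum_abs_sum_le_sum_sum_abs (Z Y : Finset V) :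
    ∑ u ∈ Y, |∑ v ∈ Z, w u v| ≤ ∑ a ∈ Z, ∑ b ∈ Y, |w a b| := by
  calc ∑ u ∈ Y, |∑ v ∈ Z, w u v| ≤ ∑ u ∈ Y, ∑ v ∈ Z, |w u v| :=
        sum_le_sum fun u _ => abs_sum_le_sum_abs _ _
    _ = ∑ a ∈ Z, ∑ b ∈ Y, |w a b| := by
        rw [sum_comm]
        exact sum_congr rfl fun a _ => sum_congr rfl fun b _ => by rw [hsymm]

end Symmetric

section Cuts

variable [DecidableEq V] {w : V → V → ℝ}

theorem crossWeight_union_left {A B : Finset V} (h : Disjoint A B) (C : Finset V) :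
    crossWeight w (A ∪ B) C = crossWeight w A C + crossWeight w B C :=
  sum_union h

theorem crossWeight_union_right (A : Finset V) {B C : Finset V} (h : Disjoint B C) :
    crossWeight w A (B ∪ C) = crossWeight w A B + crossWeight w A C := by
  simp only [crossWeight, sum_union h, sum_add_distrib]

variable [Fintype V]

theorem compl_union_eq_sdiff_union_compl_sdiff {X Z A : Finset V} (hZ : Z ⊆ X)
    (hA : Disjoint A X) : (Z ∪ A)ᶜ = X \ Z ∪ Xᶜ \ A := by
  ext v
  have := @hZ v
  have : v ∈ A → v ∉ X := fun h => disjoint_left.1 hA h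
  simp only [mem_compl, mem_union, mem_sdiff]
  tauto

theorem cutVal_eq_crossWeight (S : Finset V) : cutVal w S = crossWeight w S Sᶜ := rfl

theorem cutVal_compl (hsymm : ∀ a b, w a b = w b a) (S : Finset V) :
    cutVal w Sᶜ = cutVal w S := by
  rw [cutVal_eq_crossWeight, compl_compl, crossWeight_comm hsymm, cutVal_eq_crossWeight]

theorem cutVal_union_sub_cutVal (hsymm : ∀ a b, w a b = w b a) {X Z A : Finset V}
    (hZ : Z ⊆ X) (hA : Disjoint A X) :
    cutVal w (Z ∪ A) - cutVal w A =
      crossWeight w Z (X \ Z) + crossWeight w (Xᶜ \ A) Z - crossWeight w A Z := by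
  have hZA : Disjoint Z A := (hA.mono_right hZ).symm
  have hWB : Disjoint (X \ Z) (Xᶜ \ A) := disjoint_compl_right.mono sdiff_subset sdiff_subset
  have hZWB : Disjoint Z (X \ Z ∪ Xᶜ \ A) :=
    disjoint_union_right.2 ⟨disjoint_sdiff, disjoint_compl_right.mono hZ sdiff_subset⟩
  have hAc : Aᶜ = Z ∪ (X \ Z ∪ Xᶜ \ A) := by
    ext v
    have := @hZ v
    have : v ∈ A → v ∉ X := fun h => disjoint_left.1 hA h
    simp only [mem_compl, mem_union, mem_sdiff]
    tauto
  rw [cutVal_eq_crossWeight, cutVal_eq_crossWeight, compl_union_eq_sdiff_union_compl_sdiff hZ hA,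
    hAc, crossWeight_union_left hZA, crossWeight_union_right _ hWB, crossWeight_union_right _ hWB,
    crossWeight_union_right _ hZWB, crossWeight_union_right _ hWB,
    crossWeight_comm hsymm Z (Xᶜ \ A), crossWeight_comm hsymm A Z]
  ring

theorem cutVal_union_sub_cutVal_union (hsymm : ∀ a b, w a b = w b a) {X Z A : Finset V}
    (hZ : Z ⊆ X) (hA : Disjoint A X) :
    cutVal w (Z ∪ A) - cutVal w (X ∪ A) =
      crossWeight w Z (X \ Z) + crossWeight w A (X \ Z) - crossWeight w (Xᶜ \ A) (X \ Z) := by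
  have hXA : (X ∪ A)ᶜ = Xᶜ \ A := by ext; simp
  rw [← cutVal_compl hsymm (Z ∪ A), ← cutVal_compl hsymm (X ∪ A),
    compl_union_eq_sdiff_union_compl_sdiff hZ hA, hXA,
    cutVal_union_sub_cutVal hsymm sdiff_subset (disjoint_compl_left.mono_left sdiff_subset),
    Finset.sdiff_sdiff_eq_self hZ,
    Finset.sdiff_sdiff_eq_self (subset_compl_iff_disjoint_right.2 hA),
    crossWeight_comm hsymm (X \ Z) Z]

theorem crossWeight_sub_splitPenalty_le (hsymm : ∀ a b, w a b = w b a) {X Z A : Finset V}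
    (hZ : Z ⊆ X) (hA : Disjoint A X) {m : ℝ} (hmA : m ≤ cutVal w A)
    (hmXA : m ≤ cutVal w (X ∪ A)) :
    crossWeight w Z (X \ Z) - splitPenalty w X Z ≤ cutVal w (Z ∪ A) - m := by
  have hAY : A ⊆ Xᶜ := subset_compl_iff_disjoint_right.2 hA
  have eA := cutVal_union_sub_cutVal hsymm hZ hA
  have eXA := cutVal_union_sub_cutVal_union hsymm hZ hA
  have bZ := abs_le.1 (abs_sum_sub_sum_sdiff_le_sum_abs hAY fun u => ∑ v ∈ Z, w u v)
  have bW := abs_le.1 (abs_sum_sub_sum_sdiff_le_sum_abs hAY fun u => ∑ v ∈ X \ Z, w u v)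
  have bZW := abs_le.1 (abs_sum_sub_sum_sdiff_le_sum_abs hAY
    fun u => (∑ v ∈ Z, w u v) - ∑ v ∈ X \ Z, w u v)
  have aZ := sum_abs_sum_le_sum_sum_abs hsymm Z Xᶜ
  have aW := sum_abs_sum_le_sum_sum_abs hsymm (X \ Z) Xᶜ
  simp only [crossWeight] at eA eXA ⊢
  simp only [sum_sub_distrib] at bZW
  rw [splitPenalty, sub_le_comm]
  refine le_min (le_min ?_ ?_) ?_ <;> linarith [bZ.1, bZ.2, bW.1, bW.2, bZW.1, bZW.2]

end Cuts

theorem exists_separates [DecidableEq V] {X : Finset V} (hX : 2 ≤ X.card) :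
    ∃ S, Separates S X := by
  obtain ⟨x, hx, y, hy, hxy⟩ := one_lt_card.1 hX
  refine ⟨{x}, ?_, ?_⟩ <;> rw [inter_singleton_of_mem hx]
  · exact singleton_ne_empty x
  · exact fun h => hxy (mem_singleton.1 (h ▸ hy)).symm

theorem not_separates_sdiff [DecidableEq V] (S X : Finset V) : ¬Separates (S \ X) X :=
  fun h => h.1 (inter_sdiff_self X S)

theorem not_separates_union [DecidableEq V] (X A : Finset V) : ¬Separates (X ∪ A) X :=
  fun h => h.2 (inter_eq_left.2 subset_union_left)

theorem statement_15_general [Fintype V] [DecidableEq V]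
    (w : V → V → ℝ) (hsymm : ∀ a b, w a b = w b a)
    (X : Finset V) (hX : 2 ≤ X.card) :
    sInf ((fun Z : Finset V =>
        (∑ a ∈ Z, ∑ b ∈ X \ Z, w a b) -
          min (min ((1 / 2) * ∑ u ∈ Xᶜ, |(∑ v ∈ Z, w u v) - ∑ v ∈ X \ Z, w u v|)
                   (∑ a ∈ Z, ∑ b ∈ Xᶜ, |w a b|))
              (∑ a ∈ X \ Z, ∑ b ∈ Xᶜ, |w a b|)) ''
      {Z : Finset V | Z ⊆ X ∧ Z ≠ ∅ ∧ Z ≠ X}) ≤ nuIdx w X := by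
  obtain ⟨S₀, hS₀⟩ := exists_separates hX
  obtain ⟨S, hS, hSmin⟩ := (Set.Nonempty.image (cutVal w) ⟨S₀, hS₀⟩).csInf_mem
    (Set.toFinite (cutVal w '' {S | Separates S X}))
  have hnonsep : ∀ T, ¬Separates T X →
      sInf (cutVal w '' {S | ¬Separates S X}) ≤ cutVal w T :=
    fun T hT => csInf_le (Set.toFinite _).bddBelow ⟨T, hT, rfl⟩
  have hS_split : X ∩ S ∪ S \ X = S := by rw [inter_comm]; exact sup_inf_sdiff S X
  refine le_trans
    (csInf_le (Set.toFinite _).bddBelow ⟨X ∩ S, ⟨inter_subset_left, hS⟩, rfl⟩) ?_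
  calc crossWeight w (X ∩ S) (X \ (X ∩ S)) - splitPenalty w X (X ∩ S)
      ≤ cutVal w S - sInf (cutVal w '' {S | ¬Separates S X}) := by
        simpa only [hS_split] using crossWeight_sub_splitPenalty_le hsymm
          (inter_subset_left (s₂ := S)) disjoint_sdiff_self_left
          (hnonsep _ (not_separates_sdiff S X))
          (hnonsep _ (not_separates_union X _))
    _ = nuIdx w X := by rw [nuIdx, hSmin]

/-- Non-separability index lower bound:
`ν_G(X) ≥ min_{∅ ≠ Z ⊊ X} ( c(Z, X\Z) − P_X(Z) )` where
`P_X(Z) = min( ½ Σ_{u ∈ Y} |Σ_{v ∈ Z} w(u,v) − Σ_{v ∈ X\Z} w(u,v)|, c_abs(Z,Y), c_abs(X\Z,Y) )`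
and `Y = V \ X`. -/
theorem statement_15 [Fintype V] [DecidableEq V] [Nonempty V]
    (w : V → V → ℝ) (hsymm : ∀ a b, w a b = w b a) (hdiag : ∀ a, w a a = 0)
    (X : Finset V) (hX : 2 ≤ X.card) :
    sInf ((fun Z : Finset V =>
        (∑ a ∈ Z, ∑ b ∈ X \ Z, w a b) -
          min (min ((1 / 2) * ∑ u ∈ Xᶜ, |(∑ v ∈ Z, w u v) - ∑ v ∈ X \ Z, w u v|)
                   (∑ a ∈ Z, ∑ b ∈ Xᶜ, |w a b|))
              (∑ a ∈ X \ Z, ∑ b ∈ Xᶜ, |w a b|)) ''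
      {Z : Finset V | Z ⊆ X ∧ Z ≠ ∅ ∧ Z ≠ X}) ≤ nuIdx w X :=
  statement_15_general w hsymm X hX
end
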